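/- Residual-aware gap nonnegativity: if v is (ε, ε_T)-feasible, then for any realized pair (μ_θ, μ_{T,θ}), the gap Gap(θ) := J(θ) − [⟨v, μ₀⟩ − ε·μ_θ(Z) − ε_T·μ_{T,θ}(X) − |R_θ(v)|] equals ⟨s + ε, μ_θ⟩ + ⟨s_T + ε_T, μ_{T,θ}⟩ + 2·max(R_θ(v), 0), and in particular Gap(θ) ≥ 0. -/

import Mathlib

open MeasureTheory

lemma integral_add_const_eq_add_mul_measure_univ {α : Type*} [MeasurableSpace α]
    {μ : Measure α} [IsFiniteMeasure μ] {f : α → ℝ} (hf : Integrable f μ) (c : ℝ) :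
    ∫ x, (f x + c) ∂μ = ∫ x, f x ∂μ + c * (μ Set.univ).toReal := by
  rw [integral_add hf (integrable_const c), integral_const, smul_eq_mul, measureReal_def,
    mul_comm]

lemma abs_add_self_eq_two_mul_max_zero {α : Type*} [Ring α] [LinearOrder α] [IsOrderedRing α]
    (a : α) : |a| + a = 2 * max a 0 := by
  rw [abs_add_eq_two_nsmul_posPart, posPart_def, two_nsmul, two_mul]

theorem residual_aware_gap_nonneg_general
    {Z X : Type*} [MeasurableSpace Z] [MeasurableSpace X]
    (μθ : Measure Z) (μTθ μ₀ : Measure X)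
    [IsFiniteMeasure μθ] [IsFiniteMeasure μTθ]
    (ℓ Lfv : Z → ℝ) (g vT vt0 : X → ℝ) (ε εT : ℝ)
    (hℓ : Integrable ℓ μθ) (hLfv : Integrable Lfv μθ)
    (hg : Integrable g μTθ) (hvT : Integrable vT μTθ)
    (hfeas : ∀ z, ℓ z + Lfv z ≥ -ε)
    (hterm : ∀ x, g x - vT x ≥ -εT) :
    ((∫ z, ℓ z ∂μθ) + ∫ x, g x ∂μTθ)
      - ((∫ x, vt0 x ∂μ₀) - ε * (μθ Set.univ).toReal - εT * (μTθ Set.univ).toReal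
          - |(∫ x, vT x ∂μTθ) - (∫ x, vt0 x ∂μ₀) - ∫ z, Lfv z ∂μθ|)
    = (∫ z, (ℓ z + Lfv z + ε) ∂μθ) + (∫ x, (g x - vT x + εT) ∂μTθ)
        + 2 * max ((∫ x, vT x ∂μTθ) - (∫ x, vt0 x ∂μ₀) - ∫ z, Lfv z ∂μθ) 0
    ∧ 0 ≤ ((∫ z, ℓ z ∂μθ) + ∫ x, g x ∂μTθ)
      - ((∫ x, vt0 x ∂μ₀) - ε * (μθ Set.univ).toReal - εT * (μTθ Set.univ).toReal
          - |(∫ x, vT x ∂μTθ) - (∫ x, vt0 x ∂μ₀) - ∫ z, Lfv z ∂μθ|) := by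
  set R := (∫ x, vT x ∂μTθ) - (∫ x, vt0 x ∂μ₀) - ∫ z, Lfv z ∂μθ
  have gap_eq : ((∫ z, ℓ z ∂μθ) + ∫ x, g x ∂μTθ)
      - ((∫ x, vt0 x ∂μ₀) - ε * (μθ Set.univ).toReal - εT * (μTθ Set.univ).toReal - |R|)
      = (∫ z, (ℓ z + Lfv z + ε) ∂μθ) + (∫ x, (g x - vT x + εT) ∂μTθ) + 2 * max R 0 := by
    -- after expanding both integrals the `v`-terms assemble into `R`, leaving `|R| + R`
    rw [integral_add_const_eq_add_mul_measure_univ (f := fun z => ℓ z + Lfv z) (hℓ.add hLfv),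
      integral_add_const_eq_add_mul_measure_univ (f := fun x => g x - vT x) (hg.sub hvT),
      integral_add hℓ hLfv, integral_sub hg hvT, ← abs_add_self_eq_two_mul_max_zero]
    ring
  have hs : 0 ≤ ∫ z, (ℓ z + Lfv z + ε) ∂μθ :=
    integral_nonneg fun z => neg_le_iff_add_nonneg.mp (hfeas z)
  have hsT : 0 ≤ ∫ x, (g x - vT x + εT) ∂μTθ :=
    integral_nonneg fun x => neg_le_iff_add_nonneg.mp (hterm x)
  refine ⟨gap_eq, gap_eq ▸ ?_⟩
  have hR : 0 ≤ 2 * max R 0 := by positivity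
  linarith

/-- Residual-aware gap nonnegativity (Proposition 2, eq. (15)): if the certificate is
`(ε,ε_T)`-feasible (`s = ℓ + L_f v ≥ -ε` on `Z` and `s_T = g - v(T,·) ≥ -ε_T` on `X`),
then for any realized pair `(μθ, μTθ)` the gap
`Gap(θ) = J(θ) - [⟨v,μ₀⟩ - ε μθ(Z) - ε_T μTθ(X) - |R_θ(v)|]`
equals `⟨s+ε,μθ⟩ + ⟨s_T+ε_T,μTθ⟩ + 2 max(R_θ(v),0)`, and in particular `Gap(θ) ≥ 0`. -/
theorem residual_aware_gap_nonneg
    {Z X : Type*} [MeasurableSpace Z] [MeasurableSpace X]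
    (μθ : Measure Z) (μTθ μ₀ : Measure X)
    [IsFiniteMeasure μθ] [IsFiniteMeasure μTθ] [IsFiniteMeasure μ₀]
    (ℓ Lfv : Z → ℝ) (g vT vt0 : X → ℝ) (ε εT : ℝ)
    (hε : 0 ≤ ε) (hεT : 0 ≤ εT)
    (hℓ : Integrable ℓ μθ) (hLfv : Integrable Lfv μθ)
    (hg : Integrable g μTθ) (hvT : Integrable vT μTθ)
    (hfeas : ∀ z, ℓ z + Lfv z ≥ -ε)
    (hterm : ∀ x, g x - vT x ≥ -εT) :
    ((∫ z, ℓ z ∂μθ) + ∫ x, g x ∂μTθ)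
      - ((∫ x, vt0 x ∂μ₀) - ε * (μθ Set.univ).toReal - εT * (μTθ Set.univ).toReal
          - |(∫ x, vT x ∂μTθ) - (∫ x, vt0 x ∂μ₀) - ∫ z, Lfv z ∂μθ|)
    = (∫ z, (ℓ z + Lfv z + ε) ∂μθ) + (∫ x, (g x - vT x + εT) ∂μTθ)
        + 2 * max ((∫ x, vT x ∂μTθ) - (∫ x, vt0 x ∂μ₀) - ∫ z, Lfv z ∂μθ) 0
    ∧ 0 ≤ ((∫ z, ℓ z ∂μθ) + ∫ x, g x ∂μTθ)
      - ((∫ x, vt0 x ∂μ₀) - ε * (μθ Set.univ).toReal - εT * (μTθ Set.univ).toReal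
          - |(∫ x, vT x ∂μTθ) - (∫ x, vt0 x ∂μ₀) - ∫ z, Lfv z ∂μθ|) :=
  residual_aware_gap_nonneg_general μθ μTθ μ₀ ℓ Lfv g vT vt0 ε εT hℓ hLfv hg hvT hfeas hterm
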